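/- arXiv:2308.01598 — 7 statements merged into one kernel-verified Lean document; each statement's English description precedes it below -/
import Mathlib

section
/- Every finite simple graph has at most 2^k minimal vertex covers of size at most k. -/
/-!
A minimal vertex cover `X` of size at most `k + 1` must contain an endpoint `u` of any given
edge, and then `X \ {u}` is a minimal vertex cover of size at most `k` of the graph obtained by
deleting the edges at `u`. Branching on the two endpoints of one edge therefore gives the
recursion `N(k + 1) ≤ 2 N(k)`, with `N(0) ≤ 1`.
-/

namespace SimpleGraph

variable {V : Type*} {G : SimpleGraph V}

theorem IsVertexCover.diff_singleton {c : Set V} (hc : G.IsVertexCover c) (x : V) :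
    (G.deleteIncidenceSet x).IsVertexCover (c \ {x}) := by
  intro v w hvw
  rw [deleteIncidenceSet_adj] at hvw
  obtain ⟨hvw, hv, hw⟩ := hvw
  rcases hc hvw with h | h
  · exact Or.inl ⟨h, hv⟩
  · exact Or.inr ⟨h, hw⟩

theorem IsVertexCover.insert_of_deleteIncidenceSet {x : V} {c : Set V}
    (hc : (G.deleteIncidenceSet x).IsVertexCover c) : G.IsVertexCover (insert x c) := by
  intro v w hvw
  by_cases hv : v = x
  · exact Or.inl (Or.inl hv)
  by_cases hw : w = x
  · exact Or.inr (Or.inl hw)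
  rcases hc (deleteIncidenceSet_adj.2 ⟨hvw, hv, hw⟩) with h | h
  · exact Or.inl (Or.inr h)
  · exact Or.inr (Or.inr h)

theorem minimal_isVertexCover_erase [DecidableEq V] {X : Finset V} {x : V}
    (hX : Minimal (fun Y : Finset V ↦ G.IsVertexCover Y) X) (hx : x ∈ X) :
    Minimal (fun Y : Finset V ↦ (G.deleteIncidenceSet x).IsVertexCover Y) (X.erase x) := by
  refine ⟨by simpa only [Finset.coe_erase] using hX.prop.diff_singleton x, fun Y hY hYX ↦ ?_⟩
  have hcover : G.IsVertexCover ↑(insert x Y) := by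
    simpa only [Finset.coe_insert] using hY.insert_of_deleteIncidenceSet
  have hsub : insert x Y ⊆ X :=
    Finset.insert_subset hx (hYX.trans (Finset.erase_subset x X))
  exact Finset.subset_insert_iff.1 (hX.2 hcover hsub)

theorem eq_empty_of_minimal_isVertexCover_of_eq_bot {X : Finset V}
    (hX : Minimal (fun Y : Finset V ↦ G.IsVertexCover Y) X) (hG : G = ⊥) : X = ∅ :=
  Finset.subset_empty.1 <| hX.2 (by simpa using hG) (Finset.empty_subset X)

variable (G) in
def minimalVertexCoversOfCardLE (k : ℕ) : Set (Finset V) :=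
  {X | X.card ≤ k ∧ Minimal (fun Y : Finset V ↦ G.IsVertexCover Y) X}

theorem encard_minimalVertexCoversOfCardLE_le_one {k : ℕ} (h : k = 0 ∨ G = ⊥) :
    (G.minimalVertexCoversOfCardLE k).encard ≤ 1 := by
  have hempty : ∀ X ∈ G.minimalVertexCoversOfCardLE k, X = ∅ := by
    rintro X ⟨hcard, hX⟩
    rcases h with rfl | hG
    · exact Finset.card_eq_zero.1 (Nat.le_zero.1 hcard)
    · exact eq_empty_of_minimal_isVertexCover_of_eq_bot hX hG
  exact Set.encard_le_one_iff.2 fun X Y hX hY ↦ (hempty X hX).trans (hempty Y hY).symm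

theorem encard_minimalVertexCoversOfCardLE_mem_le (k : ℕ) (x : V) :
    {X ∈ G.minimalVertexCoversOfCardLE (k + 1) | x ∈ X}.encard ≤
      ((G.deleteIncidenceSet x).minimalVertexCoversOfCardLE k).encard := by
  classical
  refine Set.encard_le_encard_of_injOn (f := fun X ↦ X.erase x) ?_
    ((Finset.erase_injOn' x).mono fun _ hX ↦ hX.2)
  rintro X ⟨⟨hcard, hX⟩, hx⟩
  refine ⟨?_, minimal_isVertexCover_erase hX hx⟩
  rw [Finset.card_erase_of_mem hx]
  omega

theorem encard_minimalVertexCoversOfCardLE_le (G : SimpleGraph V) (k : ℕ) :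
    (G.minimalVertexCoversOfCardLE k).encard ≤ 2 ^ k := by
  induction k generalizing G with
  | zero => simpa using encard_minimalVertexCoversOfCardLE_le_one (G := G) (Or.inl rfl)
  | succ k ih =>
    by_cases hG : G = ⊥
    · calc (G.minimalVertexCoversOfCardLE (k + 1)).encard ≤ 1 :=
            encard_minimalVertexCoversOfCardLE_le_one (Or.inr hG)
        _ ≤ 2 ^ (k + 1) := one_le_pow₀ one_le_two
    obtain ⟨u, v, huv⟩ : ∃ u v, G.Adj u v := by
      simpa [eq_bot_iff_forall_not_adj] using hG
    have hsplit : G.minimalVertexCoversOfCardLE (k + 1) ⊆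
        {X ∈ G.minimalVertexCoversOfCardLE (k + 1) | u ∈ X} ∪
          {X ∈ G.minimalVertexCoversOfCardLE (k + 1) | v ∈ X} := fun X hX ↦
      (hX.2.prop huv).imp (fun hu ↦ ⟨hX, hu⟩) fun hv ↦ ⟨hX, hv⟩
    calc (G.minimalVertexCoversOfCardLE (k + 1)).encard
        ≤ {X ∈ G.minimalVertexCoversOfCardLE (k + 1) | u ∈ X}.encard +
            {X ∈ G.minimalVertexCoversOfCardLE (k + 1) | v ∈ X}.encard :=
          (Set.encard_le_encard hsplit).trans (Set.encard_union_le _ _)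
      _ ≤ 2 ^ k + 2 ^ k := add_le_add
          ((encard_minimalVertexCoversOfCardLE_mem_le k u).trans (ih _))
          ((encard_minimalVertexCoversOfCardLE_mem_le k v).trans (ih _))
      _ = 2 ^ (k + 1) := by rw [pow_succ, mul_two]

end SimpleGraph

theorem stmt_3_general {V : Type*} (G : SimpleGraph V) (k : ℕ) :
    Set.ncard {X : Finset V | X.card ≤ k ∧
      (∀ u v : V, G.Adj u v → u ∈ X ∨ v ∈ X) ∧
      (∀ Y : Finset V, Y ⊂ X → ¬ ∀ u v : V, G.Adj u v → u ∈ Y ∨ v ∈ Y)} ≤ 2 ^ k := by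
  have hset : {X : Finset V | X.card ≤ k ∧
      (∀ u v : V, G.Adj u v → u ∈ X ∨ v ∈ X) ∧
      (∀ Y : Finset V, Y ⊂ X → ¬ ∀ u v : V, G.Adj u v → u ∈ Y ∨ v ∈ Y)} =
      G.minimalVertexCoversOfCardLE k := by
    ext X
    simp only [SimpleGraph.minimalVertexCoversOfCardLE, minimal_iff_forall_lt]
    rfl
  rw [hset, Set.ncard_def]
  exact ENat.toNat_le_of_le_natCast (by exact_mod_cast G.encard_minimalVertexCoversOfCardLE_le k)

/-- Every finite simple graph has at most `2 ^ k` minimal vertex covers of size at most `k`. -/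
theorem stmt_3 {V : Type*} [Fintype V] [DecidableEq V] (G : SimpleGraph V) (k : ℕ) :
    Set.ncard {X : Finset V | X.card ≤ k ∧
      (∀ u v : V, G.Adj u v → u ∈ X ∨ v ∈ X) ∧
      (∀ Y : Finset V, Y ⊂ X → ¬ ∀ u v : V, G.Adj u v → u ∈ Y ∨ v ∈ Y)} ≤ 2 ^ k :=
  stmt_3_general G k
end

section
/- Let n, k, ℓ be positive integers with ℓ ≤ k, let U be a set of n elements, and suppose there exists an (n, k+ℓ, (k+ℓ)²)-splitter family H of functions from U to {1, ..., (k+ℓ)²} of size s. Then there exists an (n,k,ℓ)-separating family over U of size at most s · (k+ℓ)^{2ℓ}, namely the family of all preimages h^{-1}(Y) for h ∈ H and Y a subset of {1,...,(k+ℓ)²} of size ℓ. -/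
/-- From an `(n, k+ℓ, (k+ℓ)²)`-splitter family `H` of size `s` over a universe `U` of `n`
elements one obtains an `(n, k, ℓ)`-separating family of size at most `s * (k+ℓ)^(2ℓ)`,
namely the family of all preimages `h⁻¹(Y)` for `h ∈ H` and `Y ⊆ [(k+ℓ)²]` of size `ℓ`. -/
theorem stmt_4 {U : Type*} [Fintype U] (n k ℓ s : ℕ)
    (hn : Fintype.card U = n) (hk : 0 < k) (hl : 0 < ℓ) (hn0 : 0 < n)
    (hlk : ℓ ≤ k) (hkln : k + ℓ ≤ n)
    (H : Finset (U → Fin ((k + ℓ) ^ 2))) (hs : H.card = s)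
    -- `H` is an `(n, k+ℓ, (k+ℓ)²)`-splitter
    (hsplit : ∀ S : Finset U, S.card = k + ℓ → ∃ h ∈ H, Set.InjOn h ↑S) :
    -- the family of preimages is an `(n,k,ℓ)`-separating family ...
    (∀ A B : Finset U, Disjoint A B → A.card ≤ k → B.card ≤ ℓ →
      ∃ F ∈ {F : Set U | ∃ h ∈ H, ∃ Y : Finset (Fin ((k + ℓ) ^ 2)),
          Y.card = ℓ ∧ F = h ⁻¹' ↑Y},
        (↑A ∩ F = (∅ : Set U)) ∧ ↑B ⊆ F)
    -- ... of size at most `s * (k+ℓ)^(2ℓ)`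
    ∧ Set.ncard {F : Set U | ∃ h ∈ H, ∃ Y : Finset (Fin ((k + ℓ) ^ 2)),
        Y.card = ℓ ∧ F = h ⁻¹' ↑Y} ≤ s * (k + ℓ) ^ (2 * ℓ) := by
  classical
  constructor
  · intro A B hAB hA hB
    -- extend A ∪ B to a set S of size k + ℓ
    have hABcard : (A ∪ B).card ≤ k + ℓ := by
      calc (A ∪ B).card ≤ A.card + B.card := Finset.card_union_le _ _
        _ ≤ k + ℓ := Nat.add_le_add hA hB
    obtain ⟨S, hSsub2, _, hScard⟩ := Finset.exists_subsuperset_card_eq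
      (Finset.subset_univ (A ∪ B)) hABcard (by simpa [hn] using hkln)
    obtain ⟨h, hhH, hinj⟩ := hsplit S hScard
    have hAS : (A : Set U) ⊆ ↑S := by
      intro x hx; exact hSsub2 (Finset.mem_union_left _ (by exact_mod_cast hx))
    have hBS : (B : Set U) ⊆ ↑S := by
      intro x hx; exact hSsub2 (Finset.mem_union_right _ (by exact_mod_cast hx))
    -- images
    have hdisj : Disjoint (A.image h) (B.image h) := by
      rw [Finset.disjoint_left]
      rintro y hy hy'
      obtain ⟨a, ha, rfl⟩ := Finset.mem_image.1 hy
      obtain ⟨b, hb, hab⟩ := Finset.mem_image.1 hy'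
      have : b = a := hinj (hBS hb) (hAS ha) hab
      subst this
      exact (Finset.disjoint_left.1 hAB ha) hb
    -- extend h(B) to Y of size ℓ inside complement of h(A)
    have hBim : B.image h ⊆ Finset.univ \ A.image h := by
      intro y hy
      simp only [Finset.mem_sdiff, Finset.mem_univ, true_and]
      exact Finset.disjoint_right.1 hdisj hy
    have hcard1 : (B.image h).card ≤ ℓ := le_trans (Finset.card_image_le) hB
    have hcard2 : ℓ ≤ (Finset.univ \ A.image h).card := by
      have h1 : (A.image h).card ≤ k := le_trans Finset.card_image_le hA
      have h2 : (Finset.univ \ A.image h).card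
          = (k + ℓ) ^ 2 - (A.image h).card := by
        rw [Finset.card_sdiff_of_subset (Finset.subset_univ _)]
        simp
      have h3 : k + ℓ ≤ (k + ℓ) ^ 2 := by nlinarith
      omega
    obtain ⟨Y, hBY, hYsub, hYcard⟩ := Finset.exists_subsuperset_card_eq hBim hcard1 hcard2
    refine ⟨h ⁻¹' ↑Y, ⟨h, hhH, Y, hYcard, rfl⟩, ?_, ?_⟩
    · ext x
      simp only [Set.mem_inter_iff, Set.mem_preimage, Finset.mem_coe, Set.mem_empty_iff_false,
        iff_false, not_and]
      intro hxA hxY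
      have := hYsub hxY
      simp only [Finset.mem_sdiff, Finset.mem_univ, true_and, Finset.mem_image] at this
      exact this ⟨x, hxA, rfl⟩
    · intro x hx
      exact hBY (Finset.mem_image_of_mem h (by exact_mod_cast hx))
  · -- cardinality bound
    have hsub : {F : Set U | ∃ h ∈ H, ∃ Y : Finset (Fin ((k + ℓ) ^ 2)),
        Y.card = ℓ ∧ F = h ⁻¹' ↑Y}
        = ↑((H ×ˢ (Finset.univ.powersetCard ℓ)).image
            fun p : (U → Fin ((k + ℓ) ^ 2)) × Finset (Fin ((k + ℓ) ^ 2)) => p.1 ⁻¹' ↑p.2) := by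
      ext F
      simp only [Set.mem_setOf_eq, Finset.coe_image, Set.mem_image, Finset.mem_coe,
        Finset.mem_product, Finset.mem_powersetCard, Prod.exists]
      constructor
      · rintro ⟨h, hh, Y, hY, rfl⟩
        exact ⟨h, Y, ⟨hh, Finset.subset_univ _, hY⟩, rfl⟩
      · rintro ⟨h, Y, ⟨hh, _, hY⟩, rfl⟩
        exact ⟨h, hh, Y, hY, rfl⟩
    rw [hsub, Set.ncard_coe_finset]
    calc ((H ×ˢ (Finset.univ.powersetCard ℓ)).image
            fun p : (U → Fin ((k + ℓ) ^ 2)) × Finset (Fin ((k + ℓ) ^ 2)) => p.1 ⁻¹' ↑p.2).card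
        ≤ (H ×ˢ (Finset.univ.powersetCard ℓ)).card := Finset.card_image_le
      _ = s * (Finset.univ.powersetCard ℓ : Finset (Finset (Fin ((k+ℓ)^2)))).card := by
          rw [Finset.card_product, hs]
      _ ≤ s * (k + ℓ) ^ (2 * ℓ) := by
          apply Nat.mul_le_mul_left
          rw [Finset.card_powersetCard]
          calc (Finset.univ : Finset (Fin ((k+ℓ)^2))).card.choose ℓ
              ≤ (Finset.univ : Finset (Fin ((k+ℓ)^2))).card ^ ℓ := Nat.choose_le_pow _ _
            _ = (k + ℓ) ^ (2 * ℓ) := by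
                simp [Finset.card_univ, ← pow_mul]
end

section
/- Let G be a connected proper interval graph on n vertices. Then at least (4/5)·n of its vertices v satisfy that every connected component of G − N[v] has at most (9/10)·n vertices. Consequently, a uniformly random vertex is a 'middle vertex' with probability at least 4/5. -/
private lemma count_aux {V : Type*} [Fintype V] (g : V → ℝ) :
    10 * Set.ncard {v : V | 9 * Fintype.card V < 10 * Set.ncard {u : V | g u < g v}} ≤
      Fintype.card V := by
  set S := {v : V | 9 * Fintype.card V < 10 * Set.ncard {u : V | g u < g v}} with hS
  rcases S.eq_empty_or_nonempty with h | h
  · simp [h]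
  · obtain ⟨v0, hv0S, hv0min⟩ := Set.exists_min_image S g S.toFinite h
    set T := {u : V | g u < g v0} with hT
    have hdisj : Disjoint S T := by
      rw [Set.disjoint_left]
      intro a haS haT
      exact absurd (hv0min a haS) (not_le.mpr haT)
    have he : (S ∪ T).ncard = S.ncard + T.ncard :=
      Set.ncard_union_eq hdisj (Set.toFinite S) (Set.toFinite T)
    have hle : (S ∪ T).ncard ≤ Fintype.card V := by
      simpa [Set.ncard_univ, Nat.card_eq_fintype_card] using
        Set.ncard_le_ncard (Set.subset_univ (S ∪ T)) Set.finite_univ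
    have h9 : 9 * Fintype.card V < 10 * T.ncard := hv0S
    omega



/-- In a connected proper interval graph `G` on `n` vertices, at least `(4/5)·n` of the
vertices `v` are "middle vertices", i.e. every connected component of `G - N[v]` has at
most `(9/10)·n` vertices.  (Hence a uniformly random vertex is a middle vertex with
probability at least `4/5`.) -/
theorem stmt_6 {V : Type*} [Fintype V] (G : SimpleGraph V) (f : V → ℝ)
    (hf : ∀ u w : V, G.Adj u w ↔ u ≠ w ∧ |f u - f w| < 1)
    (hconn : G.Connected) :
    4 * Fintype.card V ≤
      5 * Set.ncard {v : V |
        ∀ C : (G.induce {u : V | u ≠ v ∧ ¬ G.Adj u v}).ConnectedComponent,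
          10 * C.supp.ncard ≤ 9 * Fintype.card V} := by
  classical
  set n := Fintype.card V with hn
  set M := {v : V |
      ∀ C : (G.induce {u : V | u ≠ v ∧ ¬ G.Adj u v}).ConnectedComponent,
        10 * C.supp.ncard ≤ 9 * n} with hM
  set SL := {v : V | 9 * n < 10 * Set.ncard {u : V | f u < f v}} with hSL
  set SR := {v : V | 9 * n < 10 * Set.ncard {u : V | f v < f u}} with hSR
  -- every non-neighbor of v is far from v
  have hfar : ∀ (v : V) (u : ↥{u : V | u ≠ v ∧ ¬ G.Adj u v}), 1 ≤ |f ↑u - f v| := by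
    intro v u
    have h2 := u.2
    simp only [Set.mem_setOf_eq] at h2
    have := (hf u v).not.mp h2.2
    push_neg at this
    exact this h2.1
  -- bad vertices lie in SL ∪ SR
  have hbad : Mᶜ ⊆ SL ∪ SR := by
    intro v hv
    simp only [hM, Set.mem_compl_iff, Set.mem_setOf_eq, not_forall, not_le] at hv
    obtain ⟨C, hC⟩ := hv
    -- an edge of G' preserves the side
    have hside : ∀ a b : ↥{u : V | u ≠ v ∧ ¬ G.Adj u v}, (G.induce {u : V | u ≠ v ∧ ¬ G.Adj u v}).Adj a b → (f ↑a < f v ↔ f ↑b < f v) := by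
      intro a b hab
      have hadj : G.Adj ↑a ↑b := hab
      have hlt : |f ↑a - f ↑b| < 1 := ((hf ↑a ↑b).mp hadj).2
      have ha := hfar v a
      have hb := hfar v b
      rw [abs_sub_lt_iff] at hlt
      rw [le_abs] at ha hb
      constructor
      · intro h
        rcases ha with ha | ha
        · linarith
        · rcases hb with hb | hb <;> linarith
      · intro h
        rcases hb with hb | hb
        · linarith
        · rcases ha with ha | ha <;> linarith
    -- reachability preserves the side
    have hreach : ∀ a b : ↥{u : V | u ≠ v ∧ ¬ G.Adj u v}, (G.induce {u : V | u ≠ v ∧ ¬ G.Adj u v}).Reachable a b → (f ↑a < f v ↔ f ↑b < f v) := by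
      intro a b hab
      obtain ⟨w⟩ := hab
      induction w with
      | nil => rfl
      | cons h _ ih => exact (hside _ _ h).trans ih
    obtain ⟨u0, hu0⟩ := C.exists_rep
    have hsupp : ∀ u : ↥{u : V | u ≠ v ∧ ¬ G.Adj u v}, u ∈ C.supp → (f ↑u < f v ↔ f ↑u0 < f v) := by
      intro u hu
      have : (G.induce {u : V | u ≠ v ∧ ¬ G.Adj u v}).Reachable u u0 := by
        rw [SimpleGraph.ConnectedComponent.mem_supp_iff] at hu
        exact SimpleGraph.ConnectedComponent.exact (hu.trans hu0.symm)
      exact hreach _ _ this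
    -- C.supp injects into one side
    have himg : ∀ (s : Set V), (∀ u : ↥{u : V | u ≠ v ∧ ¬ G.Adj u v}, u ∈ C.supp → (↑u : V) ∈ s) →
        C.supp.ncard ≤ s.ncard := by
      intro s hs
      have : (Subtype.val '' C.supp) ⊆ s := by
        rintro x ⟨u, hu, rfl⟩
        exact hs u hu
      calc C.supp.ncard = (Subtype.val '' C.supp).ncard :=
            (Set.ncard_image_of_injective _ Subtype.val_injective).symm
        _ ≤ s.ncard := Set.ncard_le_ncard this (Set.toFinite s)
    by_cases h0 : f ↑u0 < f v
    · left
      have := himg {u : V | f u < f v} (fun u hu => (hsupp u hu).mpr h0)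
      simp only [hSL, Set.mem_setOf_eq]
      omega
    · right
      have h0' : f v < f ↑u0 := by
        have := hfar v u0
        rw [le_abs] at this
        rcases this with h | h <;> [linarith; linarith]
      have := himg {u : V | f v < f u} (fun u hu => by
        have hside' := hsupp u hu
        have hfaru := hfar v u
        rw [le_abs] at hfaru
        simp only [Set.mem_setOf_eq]
        rcases hfaru with h | h
        · linarith
        · exfalso; exact h0 ((hsupp u hu).mp (by linarith)))
      simp only [hSR, Set.mem_setOf_eq]
      omega
  -- counting
  have hL : 10 * SL.ncard ≤ n := count_aux f
  have hR : 10 * SR.ncard ≤ n := by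
    have := count_aux (fun u => -f u)
    simpa [neg_lt_neg_iff] using this
  have hbadcard : Mᶜ.ncard ≤ SL.ncard + SR.ncard :=
    le_trans (Set.ncard_le_ncard hbad (Set.toFinite _)) (Set.ncard_union_le _ _)
  have hsplit : M.ncard + Mᶜ.ncard = n := by
    simpa [Nat.card_eq_fintype_card] using Set.ncard_add_ncard_compl M
  omega
end

section
/- Let H be a finite simple graph with minimum degree at least 2 in which every maximal path whose internal vertices and endpoints all have degree exactly 2 has at most 7 vertices, and in which no connected component is a cycle all of whose vertices have degree 2. Let X be a feedback vertex set of H and let Y = V(H) \ X. Then |Y| ≤ 16·|E(X,Y)|, where E(X,Y) is the set of edges with one endpoint in X and the other in Y. -/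
/-!
Let `Y = V \ X` and let `m` be the number of `X`–`Y` edges. As `H[Y]` is a forest, the degrees
inside `Y` sum to at most `2|Y|`; with minimum degree `2` this leaves at most `m` vertices of `Y` of
degree `≥ 3`, and at most `m` vertices of `Y` have a neighbour in `X`. Every other vertex of `Y`
has degree `2` and all its neighbours in `Y`; call these `D` and put `S = Y \ D`, so `|S| ≤ 2m`.
A component of `H[D]` lies on a maximal degree-`2` path, so it has at most `7` vertices, and since
it is not a cycle component of `H` it sends at least two edges to `S`. The forest bound again gives
at most `2|S|` edges between `D` and `S`, hence `|D| ≤ 7|S|` and `|Y| ≤ 8|S| ≤ 16m`.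
-/

open Finset

theorem Finset.mul_card_le_mul_sum_of_symmetric {ι : Type*} {D : Finset ι} {R : ι → ι → Prop}
    [DecidableRel R] (hR : ∀ y z, R y z → R z y) (f : ι → ℕ) {a b : ℕ}
    (hsize : ∀ y ∈ D, #{z ∈ D | R y z} ≤ b) (hmass : ∀ y ∈ D, a ≤ ∑ z ∈ D with R y z, f z) :
    a * #D ≤ b * ∑ z ∈ D, f z := by
  calc a * #D = ∑ _y ∈ D, a := by rw [sum_const, smul_eq_mul, mul_comm]
    _ ≤ ∑ y ∈ D, ∑ z ∈ D with R y z, f z := sum_le_sum hmass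
    _ = ∑ z ∈ D, ∑ y ∈ D with R z y, f z :=
        sum_comm' fun y z => by simp only [mem_filter]; grind
    _ = ∑ z ∈ D, #{y ∈ D | R z y} * f z := by simp only [sum_const, smul_eq_mul]
    _ ≤ ∑ z ∈ D, b * f z := sum_le_sum fun z hz => Nat.mul_le_mul_right _ (hsize z hz)
    _ = b * ∑ z ∈ D, f z := (mul_sum ..).symm

namespace SimpleGraph

variable {V : Type*} {G : SimpleGraph V}

def ReachableIn (G : SimpleGraph V) (s : Set V) (y z : V) : Prop :=
  ∃ p : G.Walk y z, ∀ x ∈ p.support, x ∈ s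

theorem ReachableIn.symm {s : Set V} {y z : V} (h : G.ReachableIn s y z) : G.ReachableIn s z y :=
  let ⟨p, hp⟩ := h
  ⟨p.reverse, fun x hx => hp x (by simpa using hx)⟩

theorem ReachableIn.mono {s t : Set V} (hst : s ⊆ t) {y z : V} (h : G.ReachableIn s y z) :
    G.ReachableIn t y z :=
  let ⟨p, hp⟩ := h
  ⟨p, fun x hx => hst (hp x hx)⟩

theorem ReachableIn.concat {s : Set V} {y z w : V} (h : G.ReachableIn s y z) (hzw : G.Adj z w)
    (hw : w ∈ s) : G.ReachableIn s y w :=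
  let ⟨p, hp⟩ := h
  ⟨p.concat hzw, fun x hx => by
    rw [Walk.support_concat, List.mem_append, List.mem_singleton] at hx
    exact hx.elim (hp x) (· ▸ hw)⟩

theorem Reachable.mem_of_forall_adj_mem {s : Set V} (hs : ∀ z ∈ s, ∀ w, G.Adj z w → w ∈ s)
    {y u : V} (h : G.Reachable y u) (hy : y ∈ s) : u ∈ s := by
  obtain ⟨p⟩ := h
  by_contra hu
  obtain ⟨d, -, hd₁, hd₂⟩ := p.exists_boundary_dart s hy hu
  exact hd₂ (hs _ hd₁ _ d.adj)

variable [Fintype V]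

theorem IsAcyclic.card_edgeFinset_le [Fintype G.edgeSet] (hG : G.IsAcyclic) :
    #G.edgeFinset ≤ Fintype.card V := by
  classical
  rcases isEmpty_or_nonempty V with _ | _
  · simp [Finset.card_eq_zero, Finset.eq_empty_iff_forall_notMem]
  obtain ⟨T, hGT, -, hT⟩ := connected_top.exists_isTree_le_of_le_of_isAcyclic le_top hG
  have := hT.card_edgeFinset
  have := card_le_card (edgeFinset_mono hGT)
  omega

theorem exists_isPath_forall_length_le (P : ∀ {u v : V}, G.Walk u v → Prop) {u₀ v₀ : V}
    {p₀ : G.Walk u₀ v₀} (hp₀ : p₀.IsPath) (hP₀ : P p₀) :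
    ∃ (u v : V) (p : G.Walk u v), p.IsPath ∧ P p ∧
      ∀ (u' v' : V) (p' : G.Walk u' v'), p'.IsPath → P p' → p'.length ≤ p.length := by
  let S := {n | ∃ (u v : V) (p : G.Walk u v), p.IsPath ∧ P p ∧ p.length = n}
  have hS : S.Finite := (Set.finite_lt_nat (Fintype.card V)).subset
    fun n ⟨_, _, _, hp, _, hn⟩ => hn ▸ hp.length_lt
  obtain ⟨_, ⟨u, v, p, hp, hPp, rfl⟩, hmax⟩ := hS.exists_maximal ⟨_, u₀, v₀, p₀, hp₀, hP₀, rfl⟩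
  refine ⟨u, v, p, hp, hPp, fun u' v' p' hp' hP' => ?_⟩
  have := @hmax _ ⟨u', v', p', hp', hP', rfl⟩
  omega

variable [DecidableRel G.Adj]

theorem Walk.IsPath.three_le_degree {u v x w : V} {p : G.Walk u v} (hp : p.IsPath)
    (hx : x ∈ p.support) (hxu : x ≠ u) (hxv : x ≠ v) (hxw : G.Adj x w) (hw : w ∉ p.support) :
    3 ≤ G.degree x := by
  obtain ⟨i, rfl, hi⟩ := Walk.mem_support_iff_exists_getVert.mp hx
  have hi0 : i ≠ 0 := by rintro rfl; simp at hxu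
  have hil : i < p.length := lt_of_le_of_ne hi (by rintro rfl; simp at hxv)
  set A := p.toSubgraph.neighborSet (p.getVert i)
  have hwA : w ∉ A := fun h =>
    hw ((p.mem_verts_toSubgraph).mp (p.toSubgraph.neighborSet_subset_verts _ h))
  have hsub : insert w A ⊆ G.neighborSet (p.getVert i) :=
    Set.insert_subset hxw (p.toSubgraph.neighborSet_subset _)
  calc 3 = (insert w A).ncard := by
        rw [Set.ncard_insert_of_notMem hwA, hp.ncard_neighborSet_toSubgraph_internal_eq_two hi0 hil]
    _ ≤ (G.neighborSet (p.getVert i)).ncard := Set.ncard_le_ncard hsub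
    _ = G.degree (p.getVert i) := by
        rw [← card_neighborSet_eq_degree, Set.ncard_eq_toFinset_card', Set.toFinset_card]

structure Walk.IsMaximalDegreeTwoPath {u v : V} (p : G.Walk u v) : Prop where
  isPath : p.IsPath
  degree_eq_two : ∀ x ∈ p.support, G.degree x = 2
  not_extend_start : ¬ ∃ w, G.Adj w u ∧ w ∉ p.support ∧ G.degree w = 2
  not_extend_end : ¬ ∃ w, G.Adj v w ∧ w ∉ p.support ∧ G.degree w = 2

/-- Take a longest degree-`2` path through `y`. It cannot be extended, and a degree-`2` walk
leaving it would give one of its vertices a third neighbour. -/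
theorem exists_isMaximalDegreeTwoPath_forall_reachableIn {y : V} (hy : G.degree y = 2) :
    ∃ (u v : V) (q : G.Walk u v), q.IsMaximalDegreeTwoPath ∧
      ∀ z, G.ReachableIn {x | G.degree x = 2} y z → z ∈ q.support := by
  obtain ⟨u, v, q, hq, ⟨hdeg, hyq⟩, hmax⟩ := exists_isPath_forall_length_le
    (fun {_ _} (p : G.Walk _ _) => (∀ x ∈ p.support, G.degree x = 2) ∧ y ∈ p.support)
    (Walk.IsPath.nil (u := y)) ⟨by simpa using hy, by simp⟩
  have hstart : ¬ ∃ w, G.Adj w u ∧ w ∉ q.support ∧ G.degree w = 2 := by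
    rintro ⟨w, hwu, hwq, hw⟩
    have := hmax _ _ (q.cons hwu) (hq.cons hwq) ⟨by simpa [hw] using hdeg, by simp [hyq]⟩
    simp at this
  have hend : ¬ ∃ w, G.Adj v w ∧ w ∉ q.support ∧ G.degree w = 2 := by
    rintro ⟨w, hvw, hwq, hw⟩
    have := hmax _ _ (q.reverse.cons hvw.symm) (hq.reverse.cons (by simpa using hwq))
      ⟨by simpa [hw] using hdeg, by simp [hyq]⟩
    simp at this
  refine ⟨u, v, q, ⟨hq, hdeg, hstart, hend⟩, fun z ⟨p, hp⟩ => ?_⟩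
  by_contra hz
  obtain ⟨d, hd, hd₁, hd₂⟩ := p.exists_boundary_dart {x | x ∈ q.support} hyq hz
  have hd₂deg : G.degree d.snd = 2 := hp _ (p.dart_snd_mem_support_of_mem_darts hd)
  by_cases hdu : d.fst = u
  · exact hstart ⟨d.snd, hdu ▸ d.adj.symm, hd₂, hd₂deg⟩
  by_cases hdv : d.fst = v
  · exact hend ⟨d.snd, hdv ▸ d.adj, hd₂, hd₂deg⟩
  have := hq.three_le_degree hd₁ hdu hdv d.adj hd₂
  have := hdeg _ hd₁
  omega

theorem card_le_of_forall_reachableIn {n : ℕ}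
    (hpath : ∀ (u v : V) (p : G.Walk u v), p.IsMaximalDegreeTwoPath → p.support.length ≤ n)
    {y : V} (hy : G.degree y = 2) {s : Finset V}
    (hs : ∀ z ∈ s, G.ReachableIn {x | G.degree x = 2} y z) : #s ≤ n := by
  classical
  obtain ⟨u, v, q, hq, hcover⟩ := exists_isMaximalDegreeTwoPath_forall_reachableIn hy
  calc #s ≤ #q.support.toFinset :=
        card_le_card fun z hz => List.mem_toFinset.mpr (hcover z (hs z hz))
    _ ≤ q.support.length := List.toFinset_card_le _
    _ ≤ n := hpath u v q hq

variable [DecidableEq V]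

theorem sum_card_neighborFinset_inter_eq (s : Finset V) :
    ∑ y ∈ s, #(G.neighborFinset y ∩ s) = 2 * #(G.induce (s : Set V)).edgeFinset := by
  rw [← sum_degrees_eq_twice_card_edges, ← Finset.sum_coe_sort s]
  refine Finset.sum_congr rfl fun v _ => ?_
  rw [← card_neighborFinset_eq_degree, ← card_map (.subtype (· ∈ (s : Set V)))]
  congr 1
  ext
  simp

theorem sum_card_neighborFinset_inter_le_of_isAcyclic {s : Finset V}
    (hs : (G.induce (s : Set V)).IsAcyclic) :
    ∑ y ∈ s, #(G.neighborFinset y ∩ s) ≤ 2 * #s := by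
  rw [sum_card_neighborFinset_inter_eq]
  simpa using hs.card_edgeFinset_le

theorem even_sum_card_neighborFinset_inter (s : Finset V) :
    Even (∑ y ∈ s, #(G.neighborFinset y ∩ s)) := by
  rw [sum_card_neighborFinset_inter_eq]
  exact even_two_mul _

theorem sum_card_neighborFinset_inter_comm (s t : Finset V) :
    ∑ y ∈ s, #(G.neighborFinset y ∩ t) = ∑ z ∈ t, #(G.neighborFinset z ∩ s) := by
  have h (y : V) (u : Finset V) : G.neighborFinset y ∩ u = u.bipartiteAbove G.Adj y := by
    ext; simp [bipartiteAbove, and_comm]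
  simp only [h]
  rw [sum_card_bipartiteAbove_eq_sum_card_bipartiteBelow]
  refine sum_congr rfl fun z _ => congrArg card ?_
  ext; simp [bipartiteBelow, bipartiteAbove, G.adj_comm]

/-- The number of `K`–`T` edges is even, as the degrees inside `K` sum to `2|K|`, and nonzero,
as otherwise `K` would contain the whole component of `y`. -/
theorem two_le_sum_card_neighborFinset_inter {K T : Finset V} (hKT : Disjoint K T)
    (hK : ∀ z ∈ K, G.degree z = 2) (hKcl : ∀ z ∈ K, G.neighborFinset z ⊆ K ∪ T)
    {y u : V} (hy : y ∈ K) (hyu : G.Reachable y u) (hu : G.degree u ≠ 2) :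
    2 ≤ ∑ z ∈ K, #(G.neighborFinset z ∩ T) := by
  have hsplit : ∀ z ∈ K, #(G.neighborFinset z ∩ K) + #(G.neighborFinset z ∩ T) = 2 := by
    intro z hz
    rw [← card_union_of_disjoint (disjoint_of_subset_left inter_subset_right
      (disjoint_of_subset_right inter_subset_right hKT)), ← inter_union_distrib_left,
      inter_eq_left.mpr (hKcl z hz), card_neighborFinset_eq_degree, hK z hz]
  have hsum : ∑ z ∈ K, #(G.neighborFinset z ∩ K) + ∑ z ∈ K, #(G.neighborFinset z ∩ T) = 2 * #K := by
    rw [← sum_add_distrib, sum_congr rfl hsplit, sum_const, smul_eq_mul, mul_comm]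
  have hne : ∑ z ∈ K, #(G.neighborFinset z ∩ T) ≠ 0 := by
    intro h0
    have hclosed : ∀ z ∈ K, ∀ w, G.Adj z w → w ∈ K := fun z hz w hzw => by
      have hT : G.neighborFinset z ∩ T = ∅ := card_eq_zero.mp (sum_eq_zero_iff.mp h0 z hz)
      have hzw' := (mem_neighborFinset _ _ _).mpr hzw
      exact (mem_union.mp (hKcl z hz hzw')).resolve_right
        fun hwT => notMem_empty w (hT ▸ mem_inter.mpr ⟨hzw', hwT⟩)
    exact hu (hK u (hyu.mem_of_forall_adj_mem hclosed hy))
  obtain ⟨k, hk⟩ := even_sum_card_neighborFinset_inter (G := G) K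
  omega

theorem two_mul_card_le_mul_sum_card_neighborFinset_inter {n : ℕ}
    (hpath : ∀ (u v : V) (p : G.Walk u v), p.IsMaximalDegreeTwoPath → p.support.length ≤ n)
    (hnocyc : ∀ v, ∃ u, G.Reachable v u ∧ G.degree u ≠ 2)
    {D T : Finset V} (hDT : Disjoint D T) (hD : ∀ y ∈ D, G.degree y = 2)
    (hDcl : ∀ y ∈ D, G.neighborFinset y ⊆ D ∪ T) :
    2 * #D ≤ n * ∑ y ∈ D, #(G.neighborFinset y ∩ T) := by
  classical
  refine mul_card_le_mul_sum_of_symmetric (R := G.ReachableIn D) (fun _ _ => ReachableIn.symm) _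
    (fun y hy => ?_) (fun y hy => ?_)
  · exact card_le_of_forall_reachableIn hpath (hD y hy)
      fun z hz => (mem_filter.mp hz).2.mono fun x hx => hD x hx
  · obtain ⟨u, hyu, hu⟩ := hnocyc y
    refine two_le_sum_card_neighborFinset_inter (disjoint_of_subset_left (filter_subset _ _) hDT)
      (fun z hz => hD z (mem_filter.mp hz).1) (fun z hz w hw => ?_)
      (mem_filter.mpr ⟨hy, ⟨.nil, by simpa using hy⟩⟩) hyu hu
    obtain ⟨hzD, hyz⟩ := mem_filter.mp hz
    rcases mem_union.mp (hDcl z hzD hw) with hwD | hwT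
    · exact mem_union_left _
        (mem_filter.mpr ⟨hwD, hyz.concat ((mem_neighborFinset _ _ _).mp hw) hwD⟩)
    · exact mem_union_right _ hwT

def degreeTwoInterior (G : SimpleGraph V) [DecidableRel G.Adj] (Y : Finset V) : Finset V :=
  {y ∈ Y | G.degree y = 2 ∧ G.neighborFinset y ⊆ Y}

theorem degreeTwoInterior_subset (Y : Finset V) : G.degreeTwoInterior Y ⊆ Y :=
  filter_subset _ _

theorem card_filter_degree_ne_two_le {Y : Finset V} (hmin : ∀ y ∈ Y, 2 ≤ G.degree y)
    (hforest : ∑ y ∈ Y, #(G.neighborFinset y ∩ Y) ≤ 2 * #Y) :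
    #{y ∈ Y | G.degree y ≠ 2} ≤ ∑ y ∈ Y, #(G.neighborFinset y \ Y) := by
  have hdeg : ∑ y ∈ Y, G.degree y =
      ∑ y ∈ Y, #(G.neighborFinset y ∩ Y) + ∑ y ∈ Y, #(G.neighborFinset y \ Y) := by
    rw [← sum_add_distrib]
    exact sum_congr rfl fun y _ => by rw [card_inter_add_card_sdiff, card_neighborFinset_eq_degree]
  have hlow : 2 * #Y + #{y ∈ Y | G.degree y ≠ 2} ≤ ∑ y ∈ Y, G.degree y := by
    rw [card_filter, mul_comm, ← smul_eq_mul, ← sum_const, ← sum_add_distrib]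
    refine sum_le_sum fun y hy => ?_
    have := hmin y hy
    split_ifs <;> omega
  omega

theorem card_filter_not_neighborFinset_subset_le (Y : Finset V) :
    #{y ∈ Y | ¬ G.neighborFinset y ⊆ Y} ≤ ∑ y ∈ Y, #(G.neighborFinset y \ Y) := by
  rw [card_filter]
  refine sum_le_sum fun y _ => ?_
  split_ifs with h
  · exact Nat.zero_le _
  · exact card_pos.mpr (sdiff_nonempty.mpr h)

theorem card_sdiff_degreeTwoInterior_le {Y : Finset V} (hmin : ∀ y ∈ Y, 2 ≤ G.degree y)
    (hforest : ∑ y ∈ Y, #(G.neighborFinset y ∩ Y) ≤ 2 * #Y) :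
    #(Y \ G.degreeTwoInterior Y) ≤ 2 * ∑ y ∈ Y, #(G.neighborFinset y \ Y) := by
  have hsub : Y \ G.degreeTwoInterior Y ⊆
      {y ∈ Y | G.degree y ≠ 2} ∪ {y ∈ Y | ¬ G.neighborFinset y ⊆ Y} := by
    intro y hy
    simp only [degreeTwoInterior, mem_sdiff, mem_filter, not_and_or] at hy
    simp only [mem_union, mem_filter]
    tauto
  have := card_filter_degree_ne_two_le hmin hforest
  have := card_filter_not_neighborFinset_subset_le (G := G) Y
  have := (card_le_card hsub).trans (card_union_le _ _)
  omega

theorem sum_card_neighborFinset_inter_sdiff_degreeTwoInterior_le {Y : Finset V}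
    (hforest : ∑ y ∈ Y, #(G.neighborFinset y ∩ Y) ≤ 2 * #Y) :
    ∑ y ∈ G.degreeTwoInterior Y, #(G.neighborFinset y ∩ (Y \ G.degreeTwoInterior Y)) ≤
      2 * #(Y \ G.degreeTwoInterior Y) := by
  set D := G.degreeTwoInterior Y
  have hDY : D ⊆ Y := degreeTwoInterior_subset Y
  have hD : ∑ y ∈ D, #(G.neighborFinset y ∩ Y) = 2 * #D := by
    rw [mul_comm, ← smul_eq_mul, ← sum_const]
    refine sum_congr rfl fun y hy => ?_
    obtain ⟨-, hdeg, hsub⟩ := mem_filter.mp hy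
    rw [inter_eq_left.mpr hsub, card_neighborFinset_eq_degree, hdeg]
  have hS : ∑ y ∈ Y \ D, #(G.neighborFinset y ∩ D) ≤ ∑ y ∈ Y \ D, #(G.neighborFinset y ∩ Y) :=
    sum_le_sum fun y _ => card_le_card (inter_subset_inter_left hDY)
  have := sum_sdiff hDY (f := fun y => #(G.neighborFinset y ∩ Y))
  have := card_sdiff_add_card_eq_card hDY
  rw [sum_card_neighborFinset_inter_comm]
  omega

theorem card_le_two_mul_succ_mul_sum_card_neighborFinset_sdiff {n : ℕ}
    (hpath : ∀ (u v : V) (p : G.Walk u v), p.IsMaximalDegreeTwoPath → p.support.length ≤ n)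
    (hnocyc : ∀ v, ∃ u, G.Reachable v u ∧ G.degree u ≠ 2) {Y : Finset V}
    (hmin : ∀ y ∈ Y, 2 ≤ G.degree y) (hforest : ∑ y ∈ Y, #(G.neighborFinset y ∩ Y) ≤ 2 * #Y) :
    #Y ≤ 2 * (n + 1) * ∑ y ∈ Y, #(G.neighborFinset y \ Y) := by
  set D := G.degreeTwoInterior Y
  have hDY : D ⊆ Y := degreeTwoInterior_subset Y
  have hS := card_sdiff_degreeTwoInterior_le hmin hforest
  have hP := sum_card_neighborFinset_inter_sdiff_degreeTwoInterior_le hforest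
  have hD : 2 * #D ≤ n * ∑ y ∈ D, #(G.neighborFinset y ∩ (Y \ D)) :=
    two_mul_card_le_mul_sum_card_neighborFinset_inter hpath hnocyc disjoint_sdiff
      (fun y hy => (mem_filter.mp hy).2.1)
      (fun y hy => by rw [union_sdiff_of_subset hDY]; exact (mem_filter.mp hy).2.2)
  have hY := card_sdiff_add_card_eq_card hDY
  have hDS : #D ≤ n * #(Y \ D) := by nlinarith
  nlinarith

theorem ncard_edges_between_eq_sum (X : Set V) [DecidablePred (· ∈ X)] :
    {e ∈ G.edgeSet | ∃ x ∈ X, ∃ y ∈ Xᶜ, e = s(x, y)}.ncard =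
      ∑ y ∈ Xᶜ.toFinset, #(G.neighborFinset y \ Xᶜ.toFinset) := by
  set Y := Xᶜ.toFinset
  have hcut : {e ∈ G.edgeSet | ∃ x ∈ X, ∃ y ∈ Xᶜ, e = s(x, y)} =
      (fun p : Σ _ : V, V => s(p.2, p.1)) '' ↑(Y.sigma fun y => G.neighborFinset y \ Y) := by
    ext e
    simp only [Set.mem_ofPred_eq, coe_sigma, Set.mem_image, Set.mem_sigma_iff, mem_coe, mem_sdiff,
      mem_neighborFinset, Y, Set.mem_toFinset, Set.mem_compl_iff, not_not, Sigma.exists]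
    constructor
    · rintro ⟨he, x, hx, y, hy, rfl⟩
      exact ⟨y, x, ⟨hy, (G.mem_edgeSet.mp he).symm, hx⟩, rfl⟩
    · rintro ⟨y, x, ⟨hy, hyx, hx⟩, rfl⟩
      exact ⟨hyx.symm, x, hx, y, hy, rfl⟩
  rw [hcut, Set.InjOn.ncard_image, Set.ncard_coe_finset, card_sigma]
  rintro ⟨y, x⟩ h ⟨y', x'⟩ h' heq
  simp only [coe_sigma, Set.mem_sigma_iff, mem_coe, mem_sdiff] at h h'
  rcases Sym2.eq_iff.mp heq with ⟨rfl, rfl⟩ | ⟨rfl, -⟩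
  · rfl
  · exact absurd h'.1 h.2.2

end SimpleGraph

theorem stmt_12_general {V : Type*} [Fintype V] (H : SimpleGraph V)
    [DecidableRel H.Adj]
    (hmin : ∀ v : V, 2 ≤ H.degree v)
    -- every maximal degree-2 path has at most 7 vertices
    (hpath : ∀ (u v : V) (p : H.Walk u v), p.IsPath →
      (∀ x ∈ p.support, H.degree x = 2) →
      (¬ ∃ w : V, H.Adj w u ∧ w ∉ p.support ∧ H.degree w = 2) →
      (¬ ∃ w : V, H.Adj v w ∧ w ∉ p.support ∧ H.degree w = 2) →
      p.support.length ≤ 7)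
    -- no connected component is a cycle of degree-2 vertices
    (hnocyc : ∀ v : V, ∃ u : V, H.Reachable v u ∧ H.degree u ≠ 2)
    -- `X` is a feedback vertex set
    (X : Set V) (hX : (H.induce Xᶜ).IsAcyclic) :
    Set.ncard Xᶜ ≤
      16 * Set.ncard {e ∈ H.edgeSet | ∃ x ∈ X, ∃ y ∈ Xᶜ, e = s(x, y)} := by
  classical
  have hforest : ∑ y ∈ Xᶜ.toFinset, #(H.neighborFinset y ∩ Xᶜ.toFinset) ≤ 2 * #Xᶜ.toFinset :=
    SimpleGraph.sum_card_neighborFinset_inter_le_of_isAcyclic (by rwa [Set.coe_toFinset])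
  rw [Set.ncard_eq_toFinset_card', SimpleGraph.ncard_edges_between_eq_sum]
  exact SimpleGraph.card_le_two_mul_succ_mul_sum_card_neighborFinset_sdiff
    (fun u v p hp => hpath u v p hp.isPath hp.degree_eq_two hp.not_extend_start hp.not_extend_end)
    hnocyc (fun y _ => hmin y) hforest

/-- Let `H` be a graph with minimum degree at least `2`, in which every maximal path all
of whose vertices have degree exactly `2` has at most `7` vertices, and no connected
component of which is a cycle all of whose vertices have degree `2` (i.e. every
component contains a vertex of degree `≠ 2`).  If `X` is a feedback vertex set of `H`
and `Y = V(H) \ X`, then `|Y| ≤ 16 · |E(X, Y)|`. -/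
theorem stmt_12 {V : Type*} [Fintype V] [DecidableEq V] (H : SimpleGraph V)
    [DecidableRel H.Adj]
    (hmin : ∀ v : V, 2 ≤ H.degree v)
    -- every maximal degree-2 path has at most 7 vertices
    (hpath : ∀ (u v : V) (p : H.Walk u v), p.IsPath →
      (∀ x ∈ p.support, H.degree x = 2) →
      (¬ ∃ w : V, H.Adj w u ∧ w ∉ p.support ∧ H.degree w = 2) →
      (¬ ∃ w : V, H.Adj v w ∧ w ∉ p.support ∧ H.degree w = 2) →
      p.support.length ≤ 7)
    -- no connected component is a cycle of degree-2 vertices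
    (hnocyc : ∀ v : V, ∃ u : V, H.Reachable v u ∧ H.degree u ≠ 2)
    -- `X` is a feedback vertex set
    (X : Set V) (hX : (H.induce Xᶜ).IsAcyclic) :
    Set.ncard Xᶜ ≤
      16 * Set.ncard {e ∈ H.edgeSet | ∃ x ∈ X, ∃ y ∈ Xᶜ, e = s(x, y)} :=
  stmt_12_general H hmin hpath hnocyc X hX
end

section
/- For any {C4, D4}-free graph G (where D4 is K4 minus an edge) and any vertex v of G lying in exactly one maximal clique of G, and for any S ⊆ V(G) \ {v}, G − S is a block graph if and only if (G − v) − S is a block graph. -/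
/-- `G` contains an induced subgraph isomorphic to `H`. -/
def ContainsInduced {V : Type*} (G : SimpleGraph V) {n : ℕ}
    (H : SimpleGraph (Fin n)) : Prop :=
  ∃ f : Fin n ↪ V, ∀ a b, H.Adj a b ↔ G.Adj (f a) (f b)

/-- `D4` is `K₄` minus an edge. -/
def D4 : SimpleGraph (Fin 4) :=
  (⊤ : SimpleGraph (Fin 4)).deleteEdges {s((0 : Fin 4), (1 : Fin 4))}

/-- A block graph: every biconnected component is a clique; equivalently, no induced
cycle of length at least 4 and no induced `D4`. -/
def IsBlockGraph {V : Type*} (G : SimpleGraph V) : Prop :=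
  (∀ n : ℕ, 4 ≤ n → ¬ ContainsInduced G (SimpleGraph.cycleGraph n)) ∧
    ¬ ContainsInduced G D4

/-- `s` is a maximal clique of `G`. -/
def IsMaxClique {V : Type*} (G : SimpleGraph V) (s : Set V) : Prop :=
  G.IsClique s ∧ ∀ t : Set V, G.IsClique t → s ⊆ t → t = s

/-- Characterisation of induced containment inside an induced subgraph. -/
lemma containsInduced_induce_iff {V : Type*} (G : SimpleGraph V) (A : Set V) {n : ℕ}
    (H : SimpleGraph (Fin n)) :
    ContainsInduced (G.induce A) H ↔
      ∃ f : Fin n ↪ V, (∀ a, f a ∈ A) ∧ ∀ a b, H.Adj a b ↔ G.Adj (f a) (f b) := by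
  constructor
  · rintro ⟨f, hf⟩
    exact ⟨f.trans (Function.Embedding.subtype _), fun a => (f a).2, fun a b => hf a b⟩
  · rintro ⟨f, hfA, hf⟩
    refine ⟨⟨fun i => ⟨f i, hfA i⟩, fun a b hab => f.injective (by simpa using hab)⟩,
      fun a b => ?_⟩
    exact hf a b

/-- Every clique extends to a maximal clique. -/
lemma exists_maxClique {V : Type*} (G : SimpleGraph V) (c : Set V) (hc : G.IsClique c) :
    ∃ m : Set V, c ⊆ m ∧ IsMaxClique G m := by
  obtain ⟨m, hcm, hm⟩ := zorn_subset_nonempty {t : Set V | G.IsClique t}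
    (fun C hC hchain hne => by
      refine ⟨⋃₀ C, ?_, fun s hs => Set.subset_sUnion_of_mem hs⟩
      intro x hx y hy hxy
      obtain ⟨s, hsC, hxs⟩ := hx
      obtain ⟨t, htC, hyt⟩ := hy
      rcases hchain.total hsC htC with h | h
      · exact hC htC (h hxs) hyt hxy
      · exact hC hsC hxs (h hyt) hxy) c hc
  refine ⟨m, hcm, hm.1, fun t ht hmt => ?_⟩
  exact subset_antisymm (hm.2 ht hmt) hmt

/-- If `v` lies in a unique maximal clique, any two distinct neighbours of `v`
are adjacent. -/
lemma adj_of_adj_adj {V : Type*} (G : SimpleGraph V) (v : V)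
    (hv : ∃! s : Set V, IsMaxClique G s ∧ v ∈ s) :
    ∀ {a b : V}, G.Adj v a → G.Adj v b → a ≠ b → G.Adj a b := by
  obtain ⟨s, ⟨hs, hvs⟩, huniq⟩ := hv
  have key : ∀ {w : V}, G.Adj v w → w ∈ s := by
    intro w hw
    have hcl : G.IsClique {v, w} := by
      intro x hx y hy hxy
      rcases hx with rfl | hx <;> rcases hy with rfl | hy
      · exact absurd rfl hxy
      · cases hy; exact hw
      · cases hx; exact hw.symm
      · cases hx; cases hy; exact absurd rfl hxy
    obtain ⟨m, hcm, hmmax⟩ := exists_maxClique G {v, w} hcl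
    have := huniq m ⟨hmmax, hcm (by simp)⟩
    subst this
    exact hcm (by simp)
  intro a b ha hb hab
  exact hs.1 (key ha) (key hb) hab

open Fin.CommRing Fin.NatCast

/-- Let `G` be a `{C4, D4}`-free graph and `v` a vertex lying in exactly one maximal
clique of `G`.  Then for every `S ⊆ V(G) \ {v}`, `G - S` is a block graph iff
`(G - v) - S` is a block graph. -/
theorem stmt_14 {V : Type*} (G : SimpleGraph V)
    (hC4 : ¬ ContainsInduced G (SimpleGraph.cycleGraph 4))
    (hD4 : ¬ ContainsInduced G D4)
    (v : V) (hv : ∃! s : Set V, IsMaxClique G s ∧ v ∈ s) :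
    ∀ S : Set V, v ∉ S →
      (IsBlockGraph (G.induce Sᶜ) ↔ IsBlockGraph (G.induce (insert v S)ᶜ)) := by
  intro S hvS
  constructor
  · rintro ⟨hcyc, hd4⟩
    constructor
    · intro n hn hcont
      rw [containsInduced_induce_iff] at hcont
      obtain ⟨f, hfA, hf⟩ := hcont
      exact hcyc n hn ((containsInduced_induce_iff G _ _).2
        ⟨f, fun a => fun haS => hfA a (Set.mem_insert_iff.2 (Or.inr haS)), hf⟩)
    · intro hcont
      rw [containsInduced_induce_iff] at hcont
      obtain ⟨f, hfA, hf⟩ := hcont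
      exact hd4 ((containsInduced_induce_iff G _ _).2
        ⟨f, fun a => fun haS => hfA a (Set.mem_insert_iff.2 (Or.inr haS)), hf⟩)
  · rintro ⟨hcyc, hd4⟩
    constructor
    · intro n hn hcont
      rw [containsInduced_induce_iff] at hcont
      obtain ⟨f, hfA, hf⟩ := hcont
      by_cases hn4 : n = 4
      · subst hn4
        exact hC4 ⟨f, hf⟩
      · have hn5 : 5 ≤ n := by omega
        by_cases hvrange : ∃ i, f i = v
        · obtain ⟨i, hi⟩ := hvrange
          obtain ⟨m, rfl⟩ : ∃ m, n = m + 5 := ⟨n - 5, by omega⟩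
          have hone : ((1 : Fin (m + 5)) : ℕ) = 1 := by
            rw [Fin.val_one']; exact Nat.mod_eq_of_lt (by omega)
          have htwo : ((2 : Fin (m + 5)) : ℕ) = 2 := by
            rw [show (2 : Fin (m + 5)) = ((2 : ℕ) : Fin (m + 5)) by norm_cast,
              Fin.val_cast_of_lt (by omega)]
          have hA1 : (SimpleGraph.cycleGraph (m + 5)).Adj i (i + 1) := by
            rw [SimpleGraph.cycleGraph_adj']
            right
            rw [show i + 1 - i = 1 by ring, hone]
          have hA2 : (SimpleGraph.cycleGraph (m + 5)).Adj i (i - 1) := by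
            rw [SimpleGraph.cycleGraph_adj']
            left
            rw [show i - (i - 1) = 1 by ring, hone]
          have hNA : ¬ (SimpleGraph.cycleGraph (m + 5)).Adj (i + 1) (i - 1) := by
            rw [SimpleGraph.cycleGraph_adj']
            rintro (h | h)
            · rw [show (i + 1) - (i - 1) = 2 by ring, htwo] at h
              omega
            · rw [show (i - 1) - (i + 1) = -2 by ring] at h
              have h1 : (-2 : Fin (m + 5)) = 1 := by
                apply Fin.val_injective
                rw [h, Fin.val_one']
                exact (Nat.mod_eq_of_lt (by omega)).symm
              have h3val : ((3 : Fin (m + 5)) : ℕ) = 3 := by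
                rw [show (3 : Fin (m + 5)) = ((3 : ℕ) : Fin (m + 5)) by norm_cast,
                  Fin.val_cast_of_lt (by omega)]
              have h3 : (3 : Fin (m + 5)) = 0 := by linear_combination -h1
              rw [Fin.ext_iff, h3val] at h3
              simp at h3
          have hne : i + 1 ≠ i - 1 := by
            intro h
            have h2 : (2 : Fin (m + 5)) = 0 := by linear_combination h
            rw [Fin.ext_iff, htwo] at h2
            simp at h2
          have hadj1 : G.Adj v (f (i + 1)) := by
            rw [← hi]; exact (hf i (i + 1)).1 hA1
          have hadj2 : G.Adj v (f (i - 1)) := by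
            rw [← hi]; exact (hf i (i - 1)).1 hA2
          have hfe : f (i + 1) ≠ f (i - 1) := fun h => hne (f.injective h)
          exact hNA ((hf _ _).2 (adj_of_adj_adj G v hv hadj1 hadj2 hfe))
        · push_neg at hvrange
          refine hcyc n hn ((containsInduced_induce_iff G _ _).2 ⟨f, fun a => ?_, hf⟩)
          rw [Set.mem_compl_iff, Set.mem_insert_iff]
          push_neg
          exact ⟨hvrange a, hfA a⟩
    · intro hcont
      rw [containsInduced_induce_iff] at hcont
      obtain ⟨f, hfA, hf⟩ := hcont
      exact hD4 ⟨f, hf⟩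
end

section
/- A graph G is a t-block graph (a chordal graph in which any two maximal cliques intersect in at most t vertices) if and only if G is both chordal and a t-flow graph (every pair of non-adjacent vertices can be disconnected by removing at most t vertices). -/
/-- A graph is chordal iff it has no induced cycle of length at least 4. -/
def Chordal {V : Type*} (G : SimpleGraph V) : Prop :=
  ∀ n : ℕ, 4 ≤ n → ¬ ContainsInduced G (SimpleGraph.cycleGraph n)

/-!
For `⇐`: two distinct maximal cliques `A`, `B` contain non-adjacent vertices `u ∈ A`, `v ∈ B`,
and every `u`–`v` separator contains `A ∩ B`, since each `z ∈ A ∩ B` is a common neighbour.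

For `⇒`: given non-adjacent `u`, `v`, take an inclusion-minimal `u`–`v` separator `S`. Every
vertex of `S` then has neighbours in the components of both `u` and `v`. By chordality `S` is a
clique (Dirac), and each of the two components contains a vertex adjacent to all of `S`. Hence `S`
lies in two maximal cliques, one through each of these vertices; they differ because no edge
joins the two components. Both chordality facts rest on one observation: two induced paths
between non-adjacent vertices whose interiors are disjoint and not joined by an edge would
form an induced cycle of length at least 4.
-/

lemma Nat.exists_last_lt_of_not {P : ℕ → Prop} {m : ℕ} (h0 : P 0) (hm : ¬ P m) :
    ∃ i < m, P i ∧ ∀ j, i < j → j ≤ m → ¬ P j := by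
  classical
  have hspec := Nat.findGreatest_spec (Nat.zero_le m) h0
  exact ⟨Nat.findGreatest P m, (Nat.findGreatest_le m).lt_of_ne fun h => hm (h ▸ hspec), hspec,
    fun j hj hjm => Nat.findGreatest_is_greatest hj hjm⟩

namespace SimpleGraph

variable {V : Type*} {G : SimpleGraph V}

lemma cycleGraph_adj_iff_of_lt {n : ℕ} {a b : Fin n} (hab : a < b) :
    (cycleGraph n).Adj a b ↔ b.val = a.val + 1 ∨ (a.val = 0 ∧ b.val + 1 = n) := by
  rw [cycleGraph_adj', Fin.sub_val_of_le hab.le, Fin.coe_sub_iff_lt.mpr hab]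
  have := b.isLt
  have : a.val < b.val := hab
  omega

theorem _root_.Chordal.false_of_hole (hG : Chordal G) {n : ℕ} (hn : 4 ≤ n) {c : ℕ → V}
    (hadj : ∀ i < n, G.Adj (c i) (c (i + 1))) (hclose : c n = c 0)
    (hfar : ∀ i j, i + 2 ≤ j → j < n → (i = 0 → j + 1 < n) → c i ≠ c j ∧ ¬ G.Adj (c i) (c j)) :
    False := by
  have hlast : G.Adj (c (n - 1)) (c 0) := by
    simpa [Nat.sub_add_cancel (by omega : 1 ≤ n), hclose] using hadj (n - 1) (by omega)
  have adj_iff : ∀ i j, i < j → j < n →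
      (G.Adj (c i) (c j) ↔ j = i + 1 ∨ (i = 0 ∧ j + 1 = n)) := by
    intro i j hij hj
    refine ⟨fun h => ?_, ?_⟩
    · by_contra hne
      exact (hfar i j (by omega) hj (by omega)).2 h
    · rintro (rfl | ⟨rfl, rfl⟩)
      · exact hadj i (by omega)
      · exact hlast.symm
  have hinj : ∀ i j, i < j → j < n → c i ≠ c j := by
    intro i j hij hj heq
    by_cases hnear : j = i + 1 ∨ (i = 0 ∧ j + 1 = n)
    · exact G.irrefl (heq ▸ (adj_iff i j hij hj).2 hnear)
    · exact (hfar i j (by omega) hj (by omega)).1 heq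
  have hinjFin : Function.Injective fun a : Fin n => c a := by
    intro a b hab
    by_contra hne
    rcases Fin.lt_or_lt_of_ne hne with h | h
    · exact hinj a b h b.isLt hab
    · exact hinj b a h a.isLt hab.symm
  refine hG n hn ⟨⟨fun a => c a, hinjFin⟩, fun a b => ?_⟩
  rcases lt_trichotomy a b with h | rfl | h
  · exact (cycleGraph_adj_iff_of_lt h).trans (adj_iff a b h b.isLt).symm
  · simp
  · rw [(cycleGraph n).adj_comm]
    exact (cycleGraph_adj_iff_of_lt h).trans ((adj_iff b a h a.isLt).symm.trans (G.adj_comm _ _))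

namespace Walk

variable {x y : V}

structure IsInducedPath (p : G.Walk x y) : Prop where
  isPath : p.IsPath
  not_adj : ∀ i j, i + 2 ≤ j → j ≤ p.length → ¬ G.Adj (p.getVert i) (p.getVert j)

lemma IsInducedPath.drop {p : G.Walk x y} (hp : p.IsInducedPath) (k : ℕ) :
    (p.drop k).IsInducedPath := by
  refine ⟨hp.isPath.drop k, fun i j hij hj => ?_⟩
  rw [drop_getVert, drop_getVert]
  rw [drop_length] at hj
  exact hp.not_adj _ _ (by omega) (by omega)

lemma IsInducedPath.ne_and_not_adj {p : G.Walk x y} (hp : p.IsInducedPath) {i j : ℕ}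
    (hij : i + 2 ≤ j) (hj : j ≤ p.length) :
    p.getVert i ≠ p.getVert j ∧ ¬ G.Adj (p.getVert i) (p.getVert j) :=
  ⟨fun heq => by
    have := hp.isPath.getVert_injOn (by simp; omega : i ∈ {i | i ≤ p.length}) (by simpa) heq
    omega, hp.not_adj i j hij hj⟩

lemma two_le_length_of_not_adj (p : G.Walk x y) (hne : x ≠ y) (hxy : ¬ G.Adj x y) :
    2 ≤ p.length := by
  match p with
  | nil => exact absurd rfl hne
  | cons h nil => exact absurd h hxy
  | cons _ (cons _ _) => simp

lemma exists_shorter_of_not_isInducedPath (p : G.Walk x y) (hp : ¬ p.IsInducedPath) :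
    ∃ q : G.Walk x y, q.length < p.length ∧ q.support ⊆ p.support := by
  have take_sub (i : ℕ) : (p.take i).support ⊆ p.support := (p.isSubwalk_take i).support_subset
  have drop_sub (j : ℕ) : (p.drop j).support ⊆ p.support := (p.isSubwalk_drop j).support_subset
  by_cases hpath : p.IsPath
  · obtain ⟨i, j, hij, hj, hadj⟩ : ∃ i j, i + 2 ≤ j ∧ j ≤ p.length ∧
        G.Adj (p.getVert i) (p.getVert j) := by
      by_contra! h
      exact hp ⟨hpath, h⟩
    refine ⟨(p.take i).append (cons hadj (p.drop j)), ?_, ?_⟩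
    · simp only [length_append, take_length, length_cons, drop_length]
      omega
    · rw [support_append, support_cons, List.tail_cons]
      exact List.append_subset.2 ⟨take_sub i, drop_sub j⟩
  · obtain ⟨i, j, hij, hj, heq⟩ : ∃ i j, i < j ∧ j ≤ p.length ∧ p.getVert i = p.getVert j := by
      rw [← IsPath.getVert_injOn_iff] at hpath
      obtain ⟨i, hi, j, hj, heq, hne⟩ : ∃ i ∈ {i | i ≤ p.length}, ∃ j ∈ {i | i ≤ p.length},
          p.getVert i = p.getVert j ∧ i ≠ j := by
        simpa [Set.InjOn] using hpath
      rcases Nat.lt_or_gt_of_ne hne with h | h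
      · exact ⟨i, j, h, hj, heq⟩
      · exact ⟨j, i, h, hi, heq.symm⟩
    refine ⟨(p.take i).append ((p.drop j).copy heq.symm rfl), ?_, ?_⟩
    · simp only [length_append, take_length, length_copy, drop_length]
      omega
    · rw [support_append, support_copy]
      exact List.append_subset.2 ⟨take_sub i, List.Subset.trans (List.tail_subset _) (drop_sub j)⟩

theorem exists_isInducedPath_of_support_subset {s : Set V} (w : G.Walk x y)
    (hw : ∀ z ∈ w.support, z ∈ s) :
    ∃ p : G.Walk x y, p.IsInducedPath ∧ ∀ z ∈ p.support, z ∈ s := by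
  induction hn : w.length using Nat.strong_induction_on generalizing w with
  | _ n ih =>
    by_cases hind : w.IsInducedPath
    · exact ⟨w, hind, hw⟩
    obtain ⟨q, hlt, hsub⟩ := w.exists_shorter_of_not_isInducedPath hind
    exact ih q.length (hn ▸ hlt) q (fun z hz => hw z (hsub hz)) rfl

end Walk

open Walk

theorem _root_.Chordal.exists_interior_eq_or_adj (hG : Chordal G) {x y : V} (hne : x ≠ y)
    (hxy : ¬ G.Adj x y) {p q : G.Walk x y} (hp : p.IsInducedPath) (hq : q.IsInducedPath) :
    ∃ i j, 0 < i ∧ i < p.length ∧ 0 < j ∧ j < q.length ∧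
      (p.getVert i = q.getVert j ∨ G.Adj (p.getVert i) (q.getVert j)) := by
  by_contra! h
  have hm := p.two_le_length_of_not_adj hne hxy
  have hk := q.two_le_length_of_not_adj hne hxy
  set cyc := p.append q.reverse
  have hlen : cyc.length = p.length + q.length := by simp [cyc]
  have hc_p : ∀ i ≤ p.length, cyc.getVert i = p.getVert i := fun i hi => by
    rw [getVert_append', if_pos hi]
  have hc_q : ∀ i, p.length ≤ i → i ≤ p.length + q.length →
      cyc.getVert i = q.getVert (p.length + q.length - i) := fun i hi hi' => by
    rcases hi.eq_or_lt with rfl | hi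
    · rw [hc_p _ le_rfl, Nat.add_sub_cancel_left, getVert_length, getVert_length]
    · rw [getVert_append', if_neg (not_le.2 hi), getVert_reverse]
      congr 1
      omega
  refine hG.false_of_hole (n := p.length + q.length) (by omega) (c := cyc.getVert)
    (fun i hi => cyc.adj_getVert_succ (hlen ▸ hi)) (by rw [← hlen, getVert_length, getVert_zero])
    fun i j hij hj h0 => ?_
  rcases le_or_gt j p.length with hjm | hjm
  · rw [hc_p i (by omega), hc_p j hjm]
    exact hp.ne_and_not_adj hij hjm
  rcases le_or_gt p.length i with him | him
  · rw [hc_q i him (by omega), hc_q j (by omega) (by omega)]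
    exact (hq.ne_and_not_adj (by omega) (by omega)).imp Ne.symm fun h h' => h h'.symm
  rw [hc_q j (by omega) (by omega)]
  rcases Nat.eq_zero_or_pos i with rfl | hi
  · simpa only [getVert_zero] using hq.ne_and_not_adj (i := 0) (by omega) (by omega)
  · rw [hc_p i (by omega)]
    exact h i (p.length + q.length - j) hi him (by omega) (by omega)

def ReachableAvoiding (G : SimpleGraph V) (S : Set V) (a b : V) : Prop :=
  ∃ w : G.Walk a b, ∀ z ∈ w.support, z ∉ S

namespace ReachableAvoiding

variable {S : Set V} {a b c : V}

lemma refl (ha : a ∉ S) : G.ReachableAvoiding S a a :=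
  ⟨.nil, by simpa⟩

lemma right_notMem (h : G.ReachableAvoiding S a b) : b ∉ S :=
  let ⟨w, hw⟩ := h
  hw b w.end_mem_support

lemma symm (h : G.ReachableAvoiding S a b) : G.ReachableAvoiding S b a :=
  let ⟨w, hw⟩ := h
  ⟨w.reverse, fun z hz => hw z (by simpa using hz)⟩

lemma trans (h : G.ReachableAvoiding S a b) (h' : G.ReachableAvoiding S b c) :
    G.ReachableAvoiding S a c :=
  let ⟨w, hw⟩ := h
  let ⟨w', hw'⟩ := h'
  ⟨w.append w', fun z hz => (Walk.mem_support_append_iff _ _).1 hz |>.elim (hw z) (hw' z)⟩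

lemma trans_adj (h : G.ReachableAvoiding S a b) (hbc : G.Adj b c) (hc : c ∉ S) :
    G.ReachableAvoiding S a c :=
  h.trans ⟨hbc.toWalk, by simp [h.right_notMem, hc]⟩

lemma exists_walk_support (h : G.ReachableAvoiding S a b) :
    ∃ w : G.Walk a b, ∀ z ∈ w.support, G.ReachableAvoiding S a z := by
  classical
  obtain ⟨w, hw⟩ := h
  exact ⟨w, fun z hz => ⟨w.takeUntil z hz,
    fun z' hz' => hw z' (w.support_takeUntil_subset_support hz hz')⟩⟩

end ReachableAvoiding

lemma exists_reachableAvoiding_adj_of_walk {S : Set V} {u x : V} (w : G.Walk u x) (hne : u ≠ x)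
    (hw : ∀ z ∈ w.support, z ∈ S → z = x) : ∃ a, G.ReachableAvoiding S u a ∧ G.Adj a x := by
  induction w with
  | nil => exact absurd rfl hne
  | @cons u b x hub p ih =>
    have hu : u ∉ S := fun huS => hne (hw u (Walk.start_mem_support _) huS)
    by_cases hbx : b = x
    · subst hbx
      exact ⟨u, .refl hu, hub⟩
    have hb : b ∉ S := fun hbS => hbx (hw b (by simp) hbS)
    obtain ⟨a, hba, hax⟩ := ih hbx fun z hz => hw z (by simp [hz])
    exact ⟨a, ((ReachableAvoiding.refl hu).trans_adj hub hb).trans hba, hax⟩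

lemma exists_reachableAvoiding_adj_of_diff_singleton {S : Set V} {u v x : V} (hu : u ∉ S)
    (hsep : ¬ G.ReachableAvoiding S u v) (hx : x ∈ S)
    (hreach : G.ReachableAvoiding (S \ {x}) u v) : ∃ a, G.ReachableAvoiding S u a ∧ G.Adj a x := by
  classical
  obtain ⟨w, hw⟩ := hreach
  have hxw : x ∈ w.support := by
    by_contra hxw
    exact hsep ⟨w, fun z hz hzS => hw z hz ⟨hzS, by rintro rfl; exact hxw hz⟩⟩
  refine exists_reachableAvoiding_adj_of_walk (w.takeUntil x hxw) (by rintro rfl; exact hu hx)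
    fun z hz hzS => ?_
  by_contra hzx
  exact hw z (w.support_takeUntil_subset_support hxw hz) ⟨hzS, hzx⟩

lemma ReachableAvoiding.exists_isInducedPath_between_adj {S : Set V} {w a a' x y : V}
    (ha : G.ReachableAvoiding S w a) (ha' : G.ReachableAvoiding S w a')
    (hax : G.Adj a x) (ha'y : G.Adj a' y) :
    ∃ p : G.Walk x y, p.IsInducedPath ∧
      ∀ i, 0 < i → i < p.length → G.ReachableAvoiding S w (p.getVert i) := by
  obtain ⟨q, hq⟩ := (ha.symm.trans ha').exists_walk_support
  obtain ⟨p, hp, hps⟩ := (cons hax.symm (q.concat ha'y)).exists_isInducedPath_of_support_subset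
    (s := {z | z = x ∨ z = y ∨ G.ReachableAvoiding S w z}) fun z hz => by
      simp only [support_cons, support_concat, List.mem_cons, List.mem_append,
        List.not_mem_nil, or_false] at hz
      rcases hz with h | h | h
      exacts [.inl h, .inr (.inr (ha.trans (hq z h))), .inr (.inl h)]
  refine ⟨p, hp, fun i h0 hi => ?_⟩
  rcases hps _ (p.getVert_mem_support i) with h | h | h
  · exact absurd ((hp.isPath.getVert_eq_start_iff hi.le).1 h) h0.ne'
  · exact absurd ((hp.isPath.getVert_eq_end_iff hi.le).1 h) hi.ne
  · exact h

theorem _root_.Chordal.isClique_of_separates (hG : Chordal G) {S : Set V} {u v : V}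
    (hsep : ¬ G.ReachableAvoiding S u v)
    (hu : ∀ x ∈ S, ∃ a, G.ReachableAvoiding S u a ∧ G.Adj a x)
    (hv : ∀ x ∈ S, ∃ a, G.ReachableAvoiding S v a ∧ G.Adj a x) : G.IsClique S := by
  intro x hx y hy hne
  by_contra hxy
  obtain ⟨a, ha, hax⟩ := hu x hx
  obtain ⟨a', ha', ha'y⟩ := hu y hy
  obtain ⟨b, hb, hbx⟩ := hv x hx
  obtain ⟨b', hb', hb'y⟩ := hv y hy
  obtain ⟨p, hp, hpu⟩ := ha.exists_isInducedPath_between_adj ha' hax ha'y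
  obtain ⟨q, hq, hqv⟩ := hb.exists_isInducedPath_between_adj hb' hbx hb'y
  obtain ⟨i, j, hi, hi', hj, hj', h⟩ := hG.exists_interior_eq_or_adj hne hxy hp hq
  have hpi := hpu i hi hi'
  have hqj := hqv j hj hj'
  rcases h with h | h
  · exact hsep (hpi.trans (h ▸ hqj).symm)
  · exact hsep ((hpi.trans_adj h hqj.right_notMem).trans hqj.symm)

theorem _root_.Chordal.exists_adj_interior (hG : Chordal G) {a x y : V} {p : G.Walk a x}
    (hp : p.IsInducedPath) (hlen : 2 ≤ p.length) (hy : y ∉ p.support) (hya : G.Adj y a)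
    (hyx : G.Adj y x) : ∃ j, 0 < j ∧ j < p.length ∧ G.Adj y (p.getVert j) := by
  obtain ⟨hne, hax⟩ := hp.ne_and_not_adj (i := 0) hlen le_rfl
  rw [getVert_zero, getVert_length] at hne hax
  have hya' : y ≠ a := fun h => hy (h ▸ p.start_mem_support)
  have hyx' : y ≠ x := fun h => hy (h ▸ p.end_mem_support)
  have hq : (cons hya.symm (cons hyx nil)).IsInducedPath := by
    refine ⟨by simp [hya'.symm, hne, hyx'], fun i j hij hj => ?_⟩
    obtain ⟨rfl, rfl⟩ : i = 0 ∧ j = 2 := by simp at hj; omega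
    simpa using hax
  obtain ⟨i, j, hi, hi', hj, hj', h⟩ := hG.exists_interior_eq_or_adj hne hax hp hq
  obtain rfl : j = 1 := by simp at hj'; omega
  simp only [getVert_cons_succ, getVert_zero] at h
  rcases h with h | h
  · exact absurd (h ▸ p.getVert_mem_support i) hy
  · exact ⟨i, hi, hi', h.symm⟩

lemma ReachableAvoiding.exists_isInducedPath_to_adj {S : Set V} {w a b x : V}
    (hb : G.ReachableAvoiding S w b) (ha : G.ReachableAvoiding S w a) (hax : G.Adj a x) :
    ∃ p : G.Walk b x, p.IsInducedPath ∧ ∀ z ∈ p.support, G.ReachableAvoiding S w z ∨ z = x := by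
  obtain ⟨q, hq⟩ := (hb.symm.trans ha).exists_walk_support
  refine (q.concat hax).exists_isInducedPath_of_support_subset
    (s := {z | G.ReachableAvoiding S w z ∨ z = x}) fun z hz => ?_
  simp only [support_concat, List.mem_append, List.mem_singleton] at hz
  exact hz.imp (fun h => hb.trans (hq z h)) id

theorem _root_.Chordal.exists_adj_forall_of_isClique [Finite V] (hG : Chordal G) {S : Set V}
    {w : V} (hw : w ∉ S) (hS : G.IsClique S)
    (hnbr : ∀ x ∈ S, ∃ a, G.ReachableAvoiding S w a ∧ G.Adj a x) :
    ∃ b, G.ReachableAvoiding S w b ∧ ∀ x ∈ S, G.Adj b x := by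
  obtain ⟨b, hb, hbmax⟩ := Set.exists_max_image {z | G.ReachableAvoiding S w z}
    (fun z => (S ∩ G.neighborSet z).ncard) (Set.toFinite _) ⟨w, .refl hw⟩
  refine ⟨b, hb, fun x hx => ?_⟩
  by_contra hbx
  obtain ⟨a, ha, hax⟩ := hnbr x hx
  obtain ⟨p, hp, hps⟩ := hb.exists_isInducedPath_to_adj ha hax
  have hlen := p.two_le_length_of_not_adj (fun h => hb.right_notMem (h ▸ hx)) hbx
  have hpC : ∀ i < p.length, G.ReachableAvoiding S w (p.getVert i) := fun i hi =>
    (hps _ (p.getVert_mem_support i)).resolve_right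
      fun h => hi.ne ((hp.isPath.getVert_eq_end_iff hi.le).1 h)
  have hpx : G.Adj p.penultimate x := p.adj_penultimate (not_nil_iff_lt_length.2 (by omega))
  -- otherwise `p.penultimate`, a neighbour of `x`, has more neighbours in `S` than `b`
  obtain ⟨y, hy, hby, hpy⟩ : ∃ y ∈ S, G.Adj b y ∧ ¬ G.Adj p.penultimate y := by
    by_contra! h
    have hlt : S ∩ G.neighborSet b ⊂ S ∩ G.neighborSet p.penultimate :=
      ⟨fun z hz => ⟨hz.1, h z hz.1 hz.2⟩, fun hsub => hbx (hsub ⟨hx, hpx⟩).2⟩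
    exact (Set.ncard_lt_ncard hlt).not_ge (hbmax _ (hpC _ (by omega)))
  obtain ⟨i₀, hi₀, hyi₀, hgt⟩ := Nat.exists_last_lt_of_not
    (P := fun i => G.Adj y (p.getVert i)) (m := p.length - 1) (by simpa using hby.symm)
    fun h => hpy h.symm
  have hyp : y ∉ (p.drop i₀).support := fun h =>
    (hps y ((p.isSubwalk_drop i₀).support_subset h)).elim (fun h => h.right_notMem hy)
      fun h => hbx (h ▸ hby)
  -- `y` closes a hole with the part of `p` after its last neighbour on `p`
  obtain ⟨j, hj, hj', hadj⟩ := hG.exists_adj_interior (hp.drop i₀) (by rw [drop_length]; omega)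
    hyp hyi₀ (hS hy hx fun h => hbx (h ▸ hby))
  rw [drop_length] at hj'
  rw [drop_getVert] at hadj
  exact hgt (i₀ + j) (by omega) (by omega) hadj

lemma IsClique.exists_isMaxClique_superset [Finite V] {s : Set V} (hs : G.IsClique s) :
    ∃ M, IsMaxClique G M ∧ s ⊆ M :=
  let ⟨M, hsM, hM⟩ := exists_maximal_ge_of_wellFoundedGT G.IsClique s hs
  ⟨M, ⟨hM.prop, fun _ ht hMt => hM.eq_of_superset ht hMt⟩, hsM⟩

lemma exists_not_adj_of_isMaxClique_ne {A B : Set V} (hA : IsMaxClique G A)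
    (hB : IsMaxClique G B) (hAB : A ≠ B) : ∃ u ∈ A, ∃ v ∈ B, u ≠ v ∧ ¬ G.Adj u v := by
  by_contra! h
  have hunion : G.IsClique (A ∪ B) :=
    Set.pairwise_union.2 ⟨hA.1, hB.1, fun a ha b hb hab =>
      ⟨h a ha b hb hab, (h a ha b hb hab).symm⟩⟩
  have hBA : B ⊆ A := hA.2 _ hunion Set.subset_union_left ▸ Set.subset_union_right
  exact hAB (hB.2 A hA.1 hBA)

lemma inter_subset_of_not_reachableAvoiding {S A B : Set V} {u v : V} (hA : G.IsClique A)
    (hB : G.IsClique B) (hu : u ∈ A) (hv : v ∈ B) (huv : u ≠ v) (hadj : ¬ G.Adj u v)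
    (huS : u ∉ S) (hvS : v ∉ S) (hsep : ¬ G.ReachableAvoiding S u v) : A ∩ B ⊆ S := by
  rintro z ⟨hzA, hzB⟩
  by_contra hzS
  have huz : u ≠ z := fun h => hadj (hB (h ▸ hzB) hv huv)
  have hzv : z ≠ v := fun h => hadj (hA hu (h ▸ hzA) huv)
  exact hsep (((ReachableAvoiding.refl huS).trans_adj (hA hu hzA huz) hzS).trans_adj
    (hB hzB hv hzv) hvS)

lemma exists_minimal_separator [Fintype V] {u v : V} (huv : u ≠ v) (hadj : ¬ G.Adj u v) :
    ∃ S : Finset V, u ∉ S ∧ v ∉ S ∧ ¬ G.ReachableAvoiding S u v ∧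
      ∀ x ∈ S, G.ReachableAvoiding (↑S \ {x}) u v := by
  classical
  obtain ⟨S, -, hS⟩ := exists_minimal_le_of_wellFoundedLT
    (fun S : Finset V => u ∉ S ∧ v ∉ S ∧ ¬ G.ReachableAvoiding S u v) (Finset.univ \ {u, v})
    ⟨by simp, by simp, fun ⟨w, hw⟩ => by
      cases w with
      | nil => exact huv rfl
      | @cons _ b _ h p =>
        exact hw b (by simp) (by simpa using ⟨h.ne', fun hb : b = v => hadj (hb ▸ h)⟩)⟩
  refine ⟨S, hS.prop.1, hS.prop.2.1, hS.prop.2.2, fun x hx => ?_⟩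
  by_contra h
  have hle := hS.le_of_le (y := S.erase x)
    ⟨fun hu => hS.prop.1 (Finset.mem_of_mem_erase hu),
      fun hv => hS.prop.2.1 (Finset.mem_of_mem_erase hv), by rwa [Finset.coe_erase]⟩
    (Finset.erase_subset x S)
  exact Finset.notMem_erase x S (hle hx)

theorem _root_.Chordal.exists_isMaxClique_ne_of_minimal_separator [Finite V] (hG : Chordal G)
    {S : Set V} {u v : V} (hu : u ∉ S) (hv : v ∉ S) (hsep : ¬ G.ReachableAvoiding S u v)
    (hmin : ∀ x ∈ S, G.ReachableAvoiding (S \ {x}) u v) :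
    ∃ A B, IsMaxClique G A ∧ IsMaxClique G B ∧ A ≠ B ∧ S ⊆ A ∩ B := by
  have hnu : ∀ x ∈ S, ∃ a, G.ReachableAvoiding S u a ∧ G.Adj a x := fun x hx =>
    exists_reachableAvoiding_adj_of_diff_singleton hu hsep hx (hmin x hx)
  have hnv : ∀ x ∈ S, ∃ a, G.ReachableAvoiding S v a ∧ G.Adj a x := fun x hx =>
    exists_reachableAvoiding_adj_of_diff_singleton hv (fun h => hsep h.symm) hx (hmin x hx).symm
  have hS := hG.isClique_of_separates hsep hnu hnv
  obtain ⟨a, ha, haS⟩ := hG.exists_adj_forall_of_isClique hu hS hnu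
  obtain ⟨b, hb, hbS⟩ := hG.exists_adj_forall_of_isClique hv hS hnv
  obtain ⟨A, hA, haA⟩ := (hS.insert fun x hx _ => haS x hx).exists_isMaxClique_superset
  obtain ⟨B, hB, hbB⟩ := (hS.insert fun x hx _ => hbS x hx).exists_isMaxClique_superset
  refine ⟨A, B, hA, hB, fun hAB => hsep ?_, fun x hx => ⟨haA (.inr hx), hbB (.inr hx)⟩⟩
  have hab : a ≠ b := fun h => hsep (ha.trans (h ▸ hb.symm))
  have hadj : G.Adj a b := hA.1 (haA (.inl rfl)) (hAB ▸ hbB (.inl rfl)) hab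
  exact (ha.trans_adj hadj hb.right_notMem).trans hb.symm

end SimpleGraph

open SimpleGraph in
theorem stmt_16_general {V : Type*} [Fintype V] (t : ℕ)
    (G : SimpleGraph V) :
    (Chordal G ∧ ∀ s s' : Set V, IsMaxClique G s → IsMaxClique G s' → s ≠ s' →
        (s ∩ s').ncard ≤ t) ↔
    (Chordal G ∧ ∀ u v : V, u ≠ v → ¬ G.Adj u v →
        ∃ S : Finset V, S.card ≤ t ∧ u ∉ S ∧ v ∉ S ∧
          ¬ ∃ w : G.Walk u v, ∀ x ∈ w.support, x ∉ S) := by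
  refine ⟨fun ⟨hG, hcap⟩ => ⟨hG, fun u v huv hadj => ?_⟩,
    fun ⟨hG, hflow⟩ => ⟨hG, fun A B hA hB hAB => ?_⟩⟩
  · obtain ⟨S, hu, hv, hsep, hmin⟩ := exists_minimal_separator huv hadj
    obtain ⟨A, B, hA, hB, hAB, hSAB⟩ :=
      hG.exists_isMaxClique_ne_of_minimal_separator hu hv hsep hmin
    refine ⟨S, ?_, hu, hv, hsep⟩
    calc S.card = (S : Set V).ncard := (Set.ncard_coe_finset S).symm
      _ ≤ (A ∩ B).ncard := Set.ncard_le_ncard hSAB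
      _ ≤ t := hcap A B hA hB hAB
  · obtain ⟨u, hu, v, hv, huv, hadj⟩ := exists_not_adj_of_isMaxClique_ne hA hB hAB
    obtain ⟨S, hcard, huS, hvS, hsep⟩ := hflow u v huv hadj
    calc (A ∩ B).ncard ≤ (S : Set V).ncard := Set.ncard_le_ncard
          (inter_subset_of_not_reachableAvoiding hA.1 hB.1 hu hv huv hadj huS hvS hsep)
      _ = S.card := Set.ncard_coe_finset S
      _ ≤ t := hcard

/-- `G` is a `t`-block graph (chordal, and any two distinct maximal cliques intersect
in at most `t` vertices) iff `G` is chordal and a `t`-flow graph (every pair of distinct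
non-adjacent vertices can be disconnected by removing at most `t` vertices). -/
theorem stmt_16 {V : Type*} [Fintype V] [DecidableEq V] (t : ℕ) (ht : 1 ≤ t)
    (G : SimpleGraph V) :
    (Chordal G ∧ ∀ s s' : Set V, IsMaxClique G s → IsMaxClique G s' → s ≠ s' →
        (s ∩ s').ncard ≤ t) ↔
    (Chordal G ∧ ∀ u v : V, u ≠ v → ¬ G.Adj u v →
        ∃ S : Finset V, S.card ≤ t ∧ u ∉ S ∧ v ∉ S ∧
          ¬ ∃ w : G.Walk u v, ∀ x ∈ w.support, x ∉ S) :=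
  stmt_16_general t G
end

section
/- Let G be a bipartite graph with parts A = {a_1,...,a_n} and B = {b_1,...,b_n}, and fix indices i, j ∈ {1,...,n}. Construct the graph H with vertex set A ∪ B ∪ {x_1,...,x_n} ∪ {y_1,...,y_n} and edges: all edges of G; all pairs within A ∪ {x_1,...,x_n} (making it a clique); the edges {x_r, y_{r'}} for all r ≠ r'; the edges {a_i, y_i}, {y_i, b_j}; and the edges {b_j, x_r} for all r ∈ {1,...,n}. Then H is a chordal graph if and only if {a_i, b_j} is an edge of G. -/
/-- Vertices of the lower-bound construction: `A`, `B` (the two sides of the bipartite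
graph `G`), and the new vertices `X = {x_1,…,x_n}` and `Y = {y_1,…,y_n}`. -/
inductive Vtx (n : ℕ) where
  | A : Fin n → Vtx n
  | B : Fin n → Vtx n
  | X : Fin n → Vtx n
  | Y : Fin n → Vtx n

/-- The edge relation of the graph `H` built from the bipartite graph `G` (given by its
adjacency relation `E` between the two sides) and the indices `i, j`: all edges of `G`;
`A ∪ X` is a clique; edges `{x_r, y_{r'}}` for `r ≠ r'`; edges `{a_i, y_i}` and
`{y_i, b_j}`; and edges `{b_j, x_r}` for all `r`. -/
def hRel (n : ℕ) (E : Fin n → Fin n → Prop) (i j : Fin n) :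
    Vtx n → Vtx n → Prop := fun u v =>
  match u, v with
  | .A _, .A _ => True
  | .A _, .X _ => True
  | .X _, .X _ => True
  | .A p, .B q => E p q
  | .X p, .Y q => p ≠ q
  | .A p, .Y q => p = i ∧ q = i
  | .Y p, .B q => p = i ∧ q = j
  | .B p, .X _ => p = j
  | _, _ => False

/-! If `¬ E i j`, then `a_i y_i b_j x_i` is an induced 4-cycle. If `E i j`, the graph has a
perfect elimination ordering: each `y_q` is simplicial (its neighbours lie in `{a_i, b_j} ∪ X`,
a clique because `b_j` sees `a_i` and all of `X`); after deleting the `y`'s, each `b_q` is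
simplicial (its remaining neighbours lie in the clique `A ∪ X`); and what is left is the clique
`A ∪ X`. A simplicial vertex lies on no induced cycle of length at least 4, because its two
neighbours on the cycle would span a chord. -/

open SimpleGraph

open Fin.NatCast Fin.CommRing in
lemma cycleGraph_exists_nonadj_neighbors {n : ℕ} (hn : 4 ≤ n) (c : Fin n) :
    ∃ u w, (cycleGraph n).Adj u c ∧ (cycleGraph n).Adj c w ∧ u ≠ w ∧ ¬(cycleGraph n).Adj u w := by
  obtain ⟨m, rfl⟩ : ∃ m, n = m + 4 := ⟨n - 4, by omega⟩
  have hne : ∀ k : ℕ, 0 < k → k < m + 4 → (k : Fin (m + 4)) ≠ 0 := by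
    intro k hk0 hk h
    exact hk0.ne' (by simpa [Nat.mod_eq_of_lt hk] using congrArg Fin.val h)
  refine ⟨c - 1, c + 1, by simp [cycleGraph_adj], by simp [cycleGraph_adj], ?_, ?_⟩
  · intro h
    exact hne 2 (by omega) (by omega) (by push_cast; linear_combination -h)
  · rw [cycleGraph_adj]
    rintro (h | h)
    · exact hne 3 (by omega) (by omega) (by push_cast; linear_combination -h)
    · exact hne 1 (by omega) (by omega) (by push_cast; linear_combination h)

lemma apply_ne_of_isClique_neighborSet_inter {V : Type*} {G : SimpleGraph V} {n : ℕ}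
    (hn : 4 ≤ n) (f : Fin n ↪ V) (hf : ∀ a b, (cycleGraph n).Adj a b ↔ G.Adj (f a) (f b))
    {s : Set V} (hfs : ∀ c, f c ∈ s) {v : V} (hv : G.IsClique (G.neighborSet v ∩ s))
    (c : Fin n) : f c ≠ v := by
  rintro rfl
  obtain ⟨u, w, hu, hw, huw, hnadj⟩ := cycleGraph_exists_nonadj_neighbors hn c
  exact hnadj <| (hf u w).2 <|
    hv ⟨((hf u c).1 hu).symm, hfs u⟩ ⟨(hf c w).1 hw, hfs w⟩ (f.injective.ne huw)

lemma containsInduced_cycleGraph_four {V : Type*} {G : SimpleGraph V} {a b c d : V}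
    (hab : G.Adj a b) (hbc : G.Adj b c) (hcd : G.Adj c d) (hda : G.Adj d a)
    (hac : a ≠ c) (hbd : b ≠ d) (hnac : ¬G.Adj a c) (hnbd : ¬G.Adj b d) :
    ContainsInduced G (cycleGraph 4) := by
  refine ⟨⟨![a, b, c, d], ?_⟩, ?_⟩
  · intro x y
    fin_cases x <;> fin_cases y <;>
      simp [hab.ne, hbc.ne, hcd.ne, hda.ne, hab.ne.symm, hbc.ne.symm, hcd.ne.symm,
        hda.ne.symm, hac, hbd, hac.symm, hbd.symm]
  · have hnca : ¬G.Adj c a := fun h => hnac h.symm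
    have hndb : ¬G.Adj d b := fun h => hnbd h.symm
    intro x y
    change _ ↔ G.Adj (![a, b, c, d] x) (![a, b, c, d] y)
    fin_cases x <;> fin_cases y <;>
      simp [cycleGraph_adj, hab, hbc, hcd, hda, hnac, hnbd, hnca, hndb, hab.symm, hbc.symm,
        hcd.symm, hda.symm] <;> decide

section Construction

variable {n : ℕ} {E : Fin n → Fin n → Prop} {i j : Fin n}

lemma isClique_range_A_union_range_X :
    (fromRel (hRel n E i j)).IsClique (Set.range Vtx.A ∪ Set.range Vtx.X) := by
  rintro _ (⟨p, rfl⟩ | ⟨p, rfl⟩) _ (⟨q, rfl⟩ | ⟨q, rfl⟩) hne <;> simp_all [hRel]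

lemma isClique_neighborSet_Y (hE : E i j) (q : Fin n) :
    (fromRel (hRel n E i j)).IsClique ((fromRel (hRel n E i j)).neighborSet (.Y q)) := by
  intro u hu w hw huw
  cases u <;> cases w <;> simp_all [hRel]

lemma neighborSet_B_inter_subset (q : Fin n) :
    (fromRel (hRel n E i j)).neighborSet (.B q) ∩ (Set.range Vtx.Y)ᶜ ⊆
      Set.range Vtx.A ∪ Set.range Vtx.X := by
  rintro (_ | _ | _ | _) <;> simp [hRel]

end Construction

/-- The graph `H` of the lower-bound construction is chordal iff `{a_i, b_j}` is an
edge of the bipartite graph `G`. -/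
theorem stmt_17 (n : ℕ) (E : Fin n → Fin n → Prop) (i j : Fin n) :
    Chordal (SimpleGraph.fromRel (hRel n E i j)) ↔ E i j := by
  constructor
  · intro hchordal
    by_contra hE
    refine hchordal 4 le_rfl (containsInduced_cycleGraph_four (a := .A i) (b := .Y i)
      (c := .B j) (d := .X i) ?_ ?_ ?_ ?_ ?_ ?_ ?_ ?_) <;> simp [hRel, hE]
  · rintro hE m hm ⟨f, hf⟩
    have hY : ∀ c q, f c ≠ .Y q := fun c q =>
      apply_ne_of_isClique_neighborSet_inter hm f hf (s := Set.univ) (fun _ => trivial)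
        (by simpa using isClique_neighborSet_Y hE q) c
    have hB : ∀ c q, f c ≠ .B q := fun c q =>
      apply_ne_of_isClique_neighborSet_inter hm f hf (s := (Set.range Vtx.Y)ᶜ)
        (by rintro c ⟨q, hq⟩; exact hY c q hq.symm)
        (isClique_range_A_union_range_X.subset (neighborSet_B_inter_subset q)) c
    have hAX : ∀ c, f c ∈ Set.range Vtx.A ∪ Set.range Vtx.X := by
      intro c
      cases h : f c <;> simp_all
    exact apply_ne_of_isClique_neighborSet_inter hm f hf hAX
      (isClique_range_A_union_range_X.subset Set.inter_subset_right) ⟨0, by omega⟩ rfl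
end
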